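/- arXiv:2112.05273 — 5 statements merged into one kernel-verified Lean document; each statement's English description precedes it below -/
import Mathlib

section
/- Let f : ℝⁿ → ℝ be differentiable with L-Lipschitz gradient and suppose ‖∇f(x)‖₂ ≤ M for all x. Then g(z) := f(z ⊙ z) has Lipschitz gradient with constant 4L + 2M on the unit sphere; specifically, for all z₁, z₂ with ‖z₁‖₂ = ‖z₂‖₂ = 1, ‖∇g(z₁) − ∇g(z₂)‖₂ ≤ (4L + 2M)‖z₁ − z₂‖₂. -/
/-!
By the chain rule `∇g(z) = 2 z ⊙ ∇f(z ⊙ z)`, because multiplication by `z` is self-adjoint.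
Writing `aₖ = ∇f(zₖ ⊙ zₖ)`, the product rule splitting
`z₁ ⊙ a₁ - z₂ ⊙ a₂ = z₁ ⊙ (a₁ - a₂) + (z₁ - z₂) ⊙ a₂` together with `‖x ⊙ y‖ ≤ ‖x‖ ‖y‖` bounds
`‖∇g(z₁) - ∇g(z₂)‖` by `2 ‖a₁ - a₂‖ + 2M ‖z₁ - z₂‖`, and the same estimate applied to
`z₁ ⊙ z₁ - z₂ ⊙ z₂` gives `‖a₁ - a₂‖ ≤ L ‖z₁ ⊙ z₁ - z₂ ⊙ z₂‖ ≤ 2L ‖z₁ - z₂‖`.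
-/

open ContinuousLinearMap Matrix WithLp
open scoped InnerProduct

theorem HasGradientAt.comp_hasFDerivAt {𝕜 F G : Type*} [RCLike 𝕜]
    [NormedAddCommGroup F] [InnerProductSpace 𝕜 F] [CompleteSpace F]
    [NormedAddCommGroup G] [InnerProductSpace 𝕜 G] [CompleteSpace G]
    {f : G → 𝕜} {s : F → G} {a : G} {S : F →L[𝕜] G} {x : F}
    (hf : HasGradientAt f a (s x)) (hs : HasFDerivAt s S x) :
    HasGradientAt (f ∘ s) ((S†) a) x := by
  rw [hasGradientAt_iff_hasFDerivAt]
  refine (hf.hasFDerivAt.comp x hs).congr_fderiv ?_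
  ext v
  simp [adjoint_inner_left]

namespace EuclideanSpace

variable {ι : Type*} [Fintype ι] [DecidableEq ι]

/-- `hadamard a v = a ⊙ v`, realised as the diagonal matrix `diag a` acting on `ℓ²`. -/
noncomputable def hadamard (a : EuclideanSpace ℝ ι) :
    EuclideanSpace ℝ ι →L[ℝ] EuclideanSpace ℝ ι :=
  toEuclideanCLM (n := ι) (𝕜 := ℝ) (diagonal (ofLp a))

@[simp]
theorem hadamard_apply (a v : EuclideanSpace ℝ ι) (i : ι) : hadamard a v i = a i * v i := by
  simp [hadamard, mulVec_diagonal]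

theorem adjoint_hadamard (a : EuclideanSpace ℝ ι) : (hadamard a)† = hadamard a := by
  rw [← star_eq_adjoint, hadamard, ← map_star, star_eq_conjTranspose, diagonal_conjTranspose]
  simp

open scoped Matrix.Norms.L2Operator in
theorem opNorm_hadamard_le (a : EuclideanSpace ℝ ι) : ‖hadamard a‖ ≤ ‖a‖ := by
  rw [hadamard, l2_opNorm_toEuclideanCLM, l2_opNorm_diagonal]
  exact pi_norm_le_iff_of_nonneg (norm_nonneg _) |>.mpr fun i => PiLp.norm_apply_le a i

theorem norm_hadamard_le (a v : EuclideanSpace ℝ ι) : ‖hadamard a v‖ ≤ ‖a‖ * ‖v‖ :=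
  (hadamard a).le_of_opNorm_le (opNorm_hadamard_le a) v

theorem norm_hadamard_sub_hadamard_le (z₁ z₂ a₁ a₂ : EuclideanSpace ℝ ι) :
    ‖hadamard z₁ a₁ - hadamard z₂ a₂‖ ≤ ‖z₁‖ * ‖a₁ - a₂‖ + ‖z₁ - z₂‖ * ‖a₂‖ := by
  have hsplit :
      hadamard z₁ a₁ - hadamard z₂ a₂ = hadamard z₁ (a₁ - a₂) + hadamard (z₁ - z₂) a₂ := by
    ext i; simp; ring
  rw [hsplit]
  exact (norm_add_le _ _).trans (add_le_add (norm_hadamard_le _ _) (norm_hadamard_le _ _))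

theorem norm_hadamard_self_sub_hadamard_self_le (z₁ z₂ : EuclideanSpace ℝ ι) :
    ‖hadamard z₁ z₁ - hadamard z₂ z₂‖ ≤ (‖z₁‖ + ‖z₂‖) * ‖z₁ - z₂‖ := by
  linarith [norm_hadamard_sub_hadamard_le z₁ z₂ z₁ z₂]

theorem hasFDerivAt_hadamard_self (z : EuclideanSpace ℝ ι) :
    HasFDerivAt (fun z => hadamard z z) (hadamard ((2 : ℝ) • z)) z := by
  rw [← hasFDerivWithinAt_univ, hasFDerivWithinAt_euclidean]
  intro i
  rw [hasFDerivWithinAt_univ]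
  have hi := PiLp.hasFDerivAt_apply (𝕜 := ℝ) 2 z i
  refine ((hi.mul hi).congr_fderiv ?_).congr_of_eventuallyEq
    (.of_forall fun y => hadamard_apply y y i)
  ext v
  simp
  ring

theorem _root_.HasGradientAt.comp_hadamard_self {f : EuclideanSpace ℝ ι → ℝ}
    {a z : EuclideanSpace ℝ ι} (hf : HasGradientAt f a (hadamard z z)) :
    HasGradientAt (fun z => f (hadamard z z)) (hadamard ((2 : ℝ) • z) a) z := by
  have h := hf.comp_hasFDerivAt (s := fun z => hadamard z z) (hasFDerivAt_hadamard_self z)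
  rwa [adjoint_hadamard] at h

theorem norm_gradient_comp_hadamard_self_sub_le {f : EuclideanSpace ℝ ι → ℝ} {L M : ℝ}
    (hf : Differentiable ℝ f)
    (hL : ∀ x y, ‖gradient f x - gradient f y‖ ≤ L * ‖x - y‖)
    (hM : ∀ x, ‖gradient f x‖ ≤ M)
    {z₁ z₂ : EuclideanSpace ℝ ι} (h₁ : ‖z₁‖ ≤ 1) (h₂ : ‖z₂‖ ≤ 1) :
    ‖gradient (fun z => f (hadamard z z)) z₁ - gradient (fun z => f (hadamard z z)) z₂‖ ≤
      (4 * L + 2 * M) * ‖z₁ - z₂‖ := by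
  rcases eq_or_ne z₁ z₂ with rfl | hne
  · simp
  have hL₀ : 0 ≤ L := nonneg_of_mul_nonneg_left ((norm_nonneg _).trans (hL z₁ z₂))
    (norm_pos_iff.mpr (sub_ne_zero.mpr hne))
  have hgrad (z : EuclideanSpace ℝ ι) := ((hf _).hasGradientAt.comp_hadamard_self (z := z)).gradient
  set a₁ := gradient f (hadamard z₁ z₁)
  set a₂ := gradient f (hadamard z₂ z₂)
  have ha : ‖a₁ - a₂‖ ≤ 2 * L * ‖z₁ - z₂‖ :=
    calc ‖a₁ - a₂‖ ≤ L * ‖hadamard z₁ z₁ - hadamard z₂ z₂‖ := hL _ _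
      _ ≤ L * ((‖z₁‖ + ‖z₂‖) * ‖z₁ - z₂‖) := by
        gcongr; exact norm_hadamard_self_sub_hadamard_self_le z₁ z₂
      _ ≤ L * (2 * ‖z₁ - z₂‖) := by gcongr; linarith
      _ = 2 * L * ‖z₁ - z₂‖ := by ring
  rw [hgrad, hgrad]
  calc ‖hadamard ((2 : ℝ) • z₁) a₁ - hadamard ((2 : ℝ) • z₂) a₂‖
      ≤ ‖(2 : ℝ) • z₁‖ * ‖a₁ - a₂‖ + ‖(2 : ℝ) • z₁ - (2 : ℝ) • z₂‖ * ‖a₂‖ :=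
        norm_hadamard_sub_hadamard_le ..
    _ = 2 * ‖z₁‖ * ‖a₁ - a₂‖ + 2 * ‖z₁ - z₂‖ * ‖a₂‖ := by
        rw [← smul_sub, norm_smul, norm_smul, Real.norm_two]
    _ ≤ 2 * 1 * (2 * L * ‖z₁ - z₂‖) + 2 * ‖z₁ - z₂‖ * M := by
        gcongr
        exact hM _
    _ = (4 * L + 2 * M) * ‖z₁ - z₂‖ := by ring

end EuclideanSpace

theorem stmt_5 (n : ℕ) (f : EuclideanSpace ℝ (Fin n) → ℝ) (L M : ℝ)
    (hf : Differentiable ℝ f)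
    (hL : ∀ x y, ‖gradient f x - gradient f y‖ ≤ L * ‖x - y‖)
    (hM : ∀ x, ‖gradient f x‖ ≤ M)
    (g : EuclideanSpace ℝ (Fin n) → ℝ)
    (hg : ∀ z, g z = f (WithLp.toLp 2 (fun i => z i * z i) : EuclideanSpace ℝ (Fin n))) :
    ∀ z₁ z₂ : EuclideanSpace ℝ (Fin n), ‖z₁‖ = 1 → ‖z₂‖ = 1 →
      ‖gradient g z₁ - gradient g z₂‖ ≤ (4 * L + 2 * M) * ‖z₁ - z₂‖ := by
  intro z₁ z₂ h₁ h₂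
  have hg' : g = fun z => f (EuclideanSpace.hadamard z z) := by
    funext z
    rw [hg]
    congr 1
    ext i
    simp
  rw [hg']
  exact EuclideanSpace.norm_gradient_comp_hadamard_self_sub_le hf hL hM h₁.le h₂.le
end

section
/- Let x* ∈ Δₙ be a first-order KKT point of minimizing a C¹ function f over the standard simplex, with multipliers λ* ∈ ℝ and β* ∈ ℝⁿ satisfying ∇f(x*) = λ*1 + β*, x* ≥ 0, β* ≥ 0, x* ⊙ β* = 0, 1ᵀx* = 1. Then every z* with z* ⊙ z* = x* satisfies the first-order KKT conditions of the sphere-constrained problem min_{‖z‖₂=1} f(z⊙z), namely ∇f(z*⊙z*) ⊙ z* = λ* z* and ‖z*‖₂² = 1. -/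
theorem stmt_8_general (n : ℕ) (f : EuclideanSpace ℝ (Fin n) → ℝ)
    (x : EuclideanSpace ℝ (Fin n)) (lam : ℝ) (beta : EuclideanSpace ℝ (Fin n))
    (hgrad : ∀ i, gradient f x i = lam + beta i)
    (hcomp : ∀ i, x i * beta i = 0)
    (hsum : ∑ i, x i = 1) :
    ∀ z : EuclideanSpace ℝ (Fin n), (∀ i, z i * z i = x i) →
      (∀ i, gradient f (WithLp.toLp 2 (fun i => z i * z i) : EuclideanSpace ℝ (Fin n)) i * z i = lam * z i)
        ∧ ‖z‖ ^ 2 = 1 := by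
  intro z hz
  have hzz : (WithLp.toLp 2 (fun i => z i * z i) : EuclideanSpace ℝ (Fin n)) = x := by
    ext i
    exact hz i
  refine ⟨fun i => ?_, ?_⟩
  · have hβz : beta i * z i = 0 := by
      rcases mul_eq_zero.mp (hcomp i) with hxi | hβi
      · simp [mul_self_eq_zero.mp ((hz i).trans hxi)]
      · simp [hβi]
    rw [hzz, hgrad i]
    linear_combination hβz
  · rw [EuclideanSpace.real_norm_sq_eq, ← hsum]
    simp only [sq, hz]

theorem stmt_8 (n : ℕ) (f : EuclideanSpace ℝ (Fin n) → ℝ)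
    (hf : ContDiff ℝ 1 f)
    (x : EuclideanSpace ℝ (Fin n)) (lam : ℝ) (beta : EuclideanSpace ℝ (Fin n))
    (hgrad : ∀ i, gradient f x i = lam + beta i)
    (hx : ∀ i, 0 ≤ x i)
    (hbeta : ∀ i, 0 ≤ beta i)
    (hcomp : ∀ i, x i * beta i = 0)
    (hsum : ∑ i, x i = 1) :
    ∀ z : EuclideanSpace ℝ (Fin n), (∀ i, z i * z i = x i) →
      (∀ i, gradient f (WithLp.toLp 2 (fun i => z i * z i) : EuclideanSpace ℝ (Fin n)) i * z i = lam * z i)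
        ∧ ‖z‖ ^ 2 = 1 :=
  stmt_8_general n f x lam beta hgrad hcomp hsum
end

section
/- Let f : ℝⁿ → ℝ be C¹ and suppose z* with ‖z*‖₂ = 1 satisfies ∇f(z*⊙z*) ⊙ z* = λ z* for some λ ∈ ℝ, and for every unit vector d orthogonal to z*, 2⟨∇f(z*⊙z*), d⊙d⟩ − 2λ‖d‖² + 4(z*⊙d)ᵀ∇²f(z*⊙z*)(z*⊙d) ≥ 0. Then x* := z* ⊙ z* satisfies the first-order KKT conditions for minimizing f over the standard simplex; in particular, [∇f(x*)]ₖ = λ whenever [x*]ₖ ≠ 0 and [∇f(x*)]ₖ ≥ λ whenever [x*]ₖ = 0. -/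
/-!
The first two conditions say that `z ⊙ z` lies in the simplex, which is `‖z‖ = 1`. Where
`z k ≠ 0`, cancelling `z k` in the first-order condition `∇f(z ⊙ z) ⊙ z = λ z` gives
`[∇f]ₖ = λ`. Where `z k = 0`, the coordinate vector `eₖ` is a unit vector orthogonal to `z` with
`z ⊙ eₖ = 0`, so the Hessian term of the second-order condition vanishes and what remains is
`2 [∇f]ₖ - 2 λ ≥ 0`.
-/

open Finset

namespace EuclideanSpace

variable {ι : Type*}

theorem toLp_mul_single_eq_zero [DecidableEq ι] {z : EuclideanSpace ℝ ι} {k : ι} (hk : z k = 0) :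
    (WithLp.toLp 2 (fun i => z i * single k (1 : ℝ) i) : EuclideanSpace ℝ ι) = 0 := by
  ext i
  by_cases hik : i = k
  · simp [hik, hk]
  · simp [hik]

variable [Fintype ι]

theorem sum_mul_self_eq_one_of_norm_eq_one {z : EuclideanSpace ℝ ι} (hz : ‖z‖ = 1) :
    ∑ i, z i * z i = 1 := by
  simpa [← pow_two, hz] using (real_norm_sq_eq z).symm

variable [DecidableEq ι]

theorem sum_mul_single_mul_self (g : ι → ℝ) (k : ι) :
    ∑ i, g i * (single k (1 : ℝ) i * single k (1 : ℝ) i) = g k := by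
  rw [sum_eq_single k (fun i _ hik => by simp [hik]) (fun hk => absurd (mem_univ k) hk)]
  simp

theorem le_of_second_order_cond (g : ι → ℝ)
    (H : ContinuousMultilinearMap ℝ (fun _ : Fin 2 => EuclideanSpace ℝ ι) ℝ)
    {z : EuclideanSpace ℝ ι} {lam : ℝ}
    (hso : ∀ d : EuclideanSpace ℝ ι, ‖d‖ = 1 → (inner ℝ d z : ℝ) = 0 →
      0 ≤ 2 * ∑ i, g i * (d i * d i) - 2 * lam * ‖d‖ ^ 2
        + 4 * H ![(WithLp.toLp 2 (fun i => z i * d i) : EuclideanSpace ℝ ι),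
                  (WithLp.toLp 2 (fun i => z i * d i) : EuclideanSpace ℝ ι)])
    {k : ι} (hk : z k = 0) : lam ≤ g k := by
  have hnorm : ‖single k (1 : ℝ)‖ = 1 := by simp
  have horth : (inner ℝ (single k (1 : ℝ)) z : ℝ) = 0 := by
    simp [inner_single_left, hk]
  have hH : H ![(0 : EuclideanSpace ℝ ι), 0] = 0 := H.map_coord_zero 0 rfl
  have key := hso _ hnorm horth
  rw [toLp_mul_single_eq_zero hk, hH, sum_mul_single_mul_self, hnorm] at key
  linarith

end EuclideanSpace

open EuclideanSpace

theorem stmt_9_general (n : ℕ) (f : EuclideanSpace ℝ (Fin n) → ℝ)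
    (z : EuclideanSpace ℝ (Fin n)) (lam : ℝ)
    (hz : ‖z‖ = 1)
    (hfo : ∀ i, gradient f (WithLp.toLp 2 (fun i => z i * z i) : EuclideanSpace ℝ (Fin n)) i * z i = lam * z i)
    (hso : ∀ d : EuclideanSpace ℝ (Fin n), ‖d‖ = 1 → (inner ℝ d z : ℝ) = 0 →
      0 ≤ 2 * ∑ i, gradient f (WithLp.toLp 2 (fun i => z i * z i) : EuclideanSpace ℝ (Fin n)) i * (d i * d i)
            - 2 * lam * ‖d‖ ^ 2
            + 4 * iteratedFDeriv ℝ 2 f (WithLp.toLp 2 (fun i => z i * z i) : EuclideanSpace ℝ (Fin n))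
                ![(WithLp.toLp 2 (fun i => z i * d i) : EuclideanSpace ℝ (Fin n)),
                  (WithLp.toLp 2 (fun i => z i * d i) : EuclideanSpace ℝ (Fin n))]) :
    (∀ i, 0 ≤ z i * z i) ∧ (∑ i, z i * z i = 1) ∧
    (∀ k, z k * z k ≠ 0 →
        gradient f (WithLp.toLp 2 (fun i => z i * z i) : EuclideanSpace ℝ (Fin n)) k = lam) ∧
    (∀ k, z k * z k = 0 →
        lam ≤ gradient f (WithLp.toLp 2 (fun i => z i * z i) : EuclideanSpace ℝ (Fin n)) k) := by
  refine ⟨fun i => mul_self_nonneg _, sum_mul_self_eq_one_of_norm_eq_one hz, ?_, ?_⟩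
  · intro k hk
    exact mul_right_cancel₀ (fun h => hk (by rw [h, mul_zero])) (hfo k)
  · intro k hk
    exact le_of_second_order_cond _ _ hso (mul_self_eq_zero.mp hk)

theorem stmt_9 (n : ℕ) (f : EuclideanSpace ℝ (Fin n) → ℝ)
    (hf : ContDiff ℝ 2 f)
    (z : EuclideanSpace ℝ (Fin n)) (lam : ℝ)
    (hz : ‖z‖ = 1)
    (hfo : ∀ i, gradient f (WithLp.toLp 2 (fun i => z i * z i) : EuclideanSpace ℝ (Fin n)) i * z i = lam * z i)
    (hso : ∀ d : EuclideanSpace ℝ (Fin n), ‖d‖ = 1 → (inner ℝ d z : ℝ) = 0 →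
      0 ≤ 2 * ∑ i, gradient f (WithLp.toLp 2 (fun i => z i * z i) : EuclideanSpace ℝ (Fin n)) i * (d i * d i)
            - 2 * lam * ‖d‖ ^ 2
            + 4 * iteratedFDeriv ℝ 2 f (WithLp.toLp 2 (fun i => z i * z i) : EuclideanSpace ℝ (Fin n))
                ![(WithLp.toLp 2 (fun i => z i * d i) : EuclideanSpace ℝ (Fin n)),
                  (WithLp.toLp 2 (fun i => z i * d i) : EuclideanSpace ℝ (Fin n))]) :
    (∀ i, 0 ≤ z i * z i) ∧ (∑ i, z i * z i = 1) ∧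
    (∀ k, z k * z k ≠ 0 →
        gradient f (WithLp.toLp 2 (fun i => z i * z i) : EuclideanSpace ℝ (Fin n)) k = lam) ∧
    (∀ k, z k * z k = 0 →
        lam ≤ gradient f (WithLp.toLp 2 (fun i => z i * z i) : EuclideanSpace ℝ (Fin n)) k) :=
  stmt_9_general n f z lam hz hfo hso
end

section
/- Suppose f is convex and differentiable and z* is a point of the unit sphere satisfying the first-order KKT conditions of min_{‖z‖₂=1} f(z⊙z) (i.e., ∇f(z*⊙z*) ⊙ z* = λ z* for some λ), together with the second-order condition that for all d ⊥ z*: 2⟨∇f(z*⊙z*), d⊙d⟩ − 2λ‖d‖² + 4(z*⊙d)ᵀ∇²f(z*⊙z*)(z*⊙d) ≥ 0. Then x* = z* ⊙ z* is a global minimizer of f over the standard simplex Δₙ. -/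
/-!
At `x = z ⊙ z`, the first-order condition gives `∂ᵢ f x = λ` wherever `zᵢ ≠ 0`, and the
second-order condition with `d = eᵢ` gives `∂ᵢ f x ≥ λ` wherever `zᵢ = 0`, because then
`d ⊥ z` and `z ⊙ d = 0` kills the Hessian term. Hence `⟪∇ f x, y - x⟫ = ⟪∇ f x, y⟫ - λ ≥ 0`
for every `y` in the simplex, and convexity gives `f y ≥ f x + ⟪∇ f x, y - x⟫`.
-/

open scoped RealInnerProductSpace

theorem ConvexOn.add_fderiv_sub_le {E : Type*} [NormedAddCommGroup E] [NormedSpace ℝ E]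
    {s : Set E} {f : E → ℝ} {x y : E} (hf : ConvexOn ℝ s f) (hx : x ∈ s) (hy : y ∈ s)
    (hd : DifferentiableAt ℝ f x) :
    f x + fderiv ℝ f x (y - x) ≤ f y := by
  let γ : ℝ →ᵃ[ℝ] E := AffineMap.lineMap x y
  have hγ : HasDerivAt γ (y - x) 0 := by
    simpa [γ] using AffineMap.hasDerivAt_lineMap (a := x) (b := y) (x := (0:ℝ))
  have hderiv : HasDerivAt (f ∘ γ) (fderiv ℝ f x (y - x)) 0 :=
    (by simpa [γ] using hd.hasFDerivAt : HasFDerivAt f _ (γ 0)).comp_hasDerivAt 0 hγ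
  have hslope := (hf.comp_affineMap γ).le_slope_of_hasDerivAt
    (by simpa [γ] using hx) (by simpa [γ] using hy) zero_lt_one hderiv
  have hslope_eq : slope (f ∘ γ) 0 1 = f y - f x := by simp [slope_def_field, γ]
  linarith

theorem ConvexOn.add_inner_gradient_sub_le {E : Type*} [NormedAddCommGroup E]
    [InnerProductSpace ℝ E] [CompleteSpace E] {s : Set E} {f : E → ℝ} {x y : E}
    (hf : ConvexOn ℝ s f) (hx : x ∈ s) (hy : y ∈ s) (hd : DifferentiableAt ℝ f x) :
    f x + ⟪gradient f x, y - x⟫ ≤ f y := by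
  rw [inner_gradient_left]
  exact hf.add_fderiv_sub_le hx hy hd

theorem le_sum_mul_of_forall_le {ι : Type*} [Fintype ι] {g y : ι → ℝ} {c : ℝ}
    (hg : ∀ i, c ≤ g i) (hy : ∀ i, 0 ≤ y i) (hy₁ : ∑ i, y i = 1) :
    c ≤ ∑ i, g i * y i :=
  calc c = ∑ i, c * y i := by rw [← Finset.mul_sum, hy₁, mul_one]
    _ ≤ ∑ i, g i * y i := Finset.sum_le_sum fun i _ ↦ mul_le_mul_of_nonneg_right (hg i) (hy i)

theorem EuclideanSpace.toLp_mul_single_eq_zero_s12 {ι : Type*} [Fintype ι] [DecidableEq ι]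
    {z : EuclideanSpace ℝ ι} {i : ι} (hzi : z i = 0) (a : ℝ) :
    (WithLp.toLp 2 (fun j ↦ z j * EuclideanSpace.single i a j) : EuclideanSpace ℝ ι) = 0 := by
  ext j
  by_cases h : j = i <;> simp [h, hzi]

theorem stmt_12 (n : ℕ) (f : EuclideanSpace ℝ (Fin n) → ℝ)
    (hconv : ConvexOn ℝ Set.univ f)
    (hf : ContDiff ℝ 2 f)
    (z : EuclideanSpace ℝ (Fin n)) (lam : ℝ)
    (hz : ‖z‖ = 1)
    (hfo : ∀ i, gradient f (WithLp.toLp 2 (fun i => z i * z i) : EuclideanSpace ℝ (Fin n)) i * z i = lam * z i)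
    (hso : ∀ d : EuclideanSpace ℝ (Fin n), (inner ℝ d z : ℝ) = 0 →
      0 ≤ 2 * ∑ i, gradient f (WithLp.toLp 2 (fun i => z i * z i) : EuclideanSpace ℝ (Fin n)) i * (d i * d i)
            - 2 * lam * ‖d‖ ^ 2
            + 4 * iteratedFDeriv ℝ 2 f (WithLp.toLp 2 (fun i => z i * z i) : EuclideanSpace ℝ (Fin n))
                ![(WithLp.toLp 2 (fun i => z i * d i) : EuclideanSpace ℝ (Fin n)),
                  (WithLp.toLp 2 (fun i => z i * d i) : EuclideanSpace ℝ (Fin n))]) :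
    (∀ i, 0 ≤ z i * z i) ∧ (∑ i, z i * z i = 1) ∧
    ∀ y : EuclideanSpace ℝ (Fin n), (∀ i, 0 ≤ y i) → ∑ i, y i = 1 →
      f (WithLp.toLp 2 (fun i => z i * z i) : EuclideanSpace ℝ (Fin n)) ≤ f y := by
  set x : EuclideanSpace ℝ (Fin n) := WithLp.toLp 2 (fun i => z i * z i)
  set g := gradient f x
  have hsum : ∑ i, z i * z i = 1 := by
    simpa [EuclideanSpace.norm_eq, Real.sqrt_eq_one, ← sq] using hz
  have hgx : ∑ i, g i * x i = lam := by
    change ∑ i, g i * (z i * z i) = lam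
    simp_rw [← mul_assoc, hfo, mul_assoc, ← Finset.mul_sum, hsum, mul_one]
  have hlam_le : ∀ i, lam ≤ g i := by
    intro i
    by_cases hzi : z i = 0
    · have h := hso (EuclideanSpace.single i 1)
        (by simp [EuclideanSpace.inner_single_left, hzi])
      rw [EuclideanSpace.toLp_mul_single_eq_zero_s12 hzi,
        (iteratedFDeriv ℝ 2 f x).map_coord_zero (0 : Fin 2) rfl] at h
      simpa [PiLp.single_apply] using h
    · exact (mul_right_cancel₀ hzi (hfo i)).ge
  refine ⟨fun i ↦ mul_self_nonneg _, hsum, fun y hy hy₁ ↦ ?_⟩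
  have hinner : ⟪g, y - x⟫ = ∑ i, g i * y i - lam := by
    simp [← hgx, PiLp.inner_apply, sub_mul, Finset.sum_sub_distrib, mul_comm]
  have hfirst_order := hconv.add_inner_gradient_sub_le (Set.mem_univ x) (Set.mem_univ y)
    (hf.differentiable (by norm_num) x)
  linarith [le_sum_mul_of_forall_le hlam_le hy hy₁]
end

section
/- Let f : ℝⁿ → ℝ be continuous and g(z) := f(z ⊙ z). If x* = z* ⊙ z* is a local minimizer of f on the standard simplex Δₙ, then z* is a local minimizer of g on the unit sphere. Specifically, if f(x*) ≤ f(x) for all x ∈ Δₙ with |xᵢ − x*ᵢ| < ε for all i, then g(z*) ≤ g(z) for all z on the unit sphere with |zᵢ − z*ᵢ| < ε/2 for all i. -/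
theorem abs_mul_self_sub_mul_self_le {R : Type*} [CommRing R] [LinearOrder R] [IsStrictOrderedRing R]
    (a b : R) : |a * a - b * b| ≤ (|a| + |b|) * |a - b| := by
  rw [mul_self_sub_mul_self, abs_mul]
  exact mul_le_mul_of_nonneg_right (abs_add_le a b) (abs_nonneg _)

namespace EuclideanSpace

variable {ι : Type*} [Fintype ι]

theorem sum_mul_self_eq_norm_sq (z : EuclideanSpace ℝ ι) : ∑ i, z i * z i = ‖z‖ ^ 2 := by
  simp only [PiLp.norm_sq_eq_of_L2, Real.norm_eq_abs, sq_abs, ← sq]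

theorem mul_self_mem_stdSimplex {z : EuclideanSpace ℝ ι} (hz : ‖z‖ = 1) :
    (fun i => z i * z i) ∈ stdSimplex ℝ ι :=
  ⟨fun i => mul_self_nonneg (z i), by rw [sum_mul_self_eq_norm_sq, hz, one_pow]⟩

theorem abs_mul_self_sub_mul_self_le {z w : EuclideanSpace ℝ ι} (hz : ‖z‖ ≤ 1) (hw : ‖w‖ ≤ 1)
    (i : ι) : |z i * z i - w i * w i| ≤ 2 * |z i - w i| := by
  have hzi : |z i| ≤ 1 := (PiLp.norm_apply_le z i).trans hz
  have hwi : |w i| ≤ 1 := (PiLp.norm_apply_le w i).trans hw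
  calc |z i * z i - w i * w i| ≤ (|z i| + |w i|) * |z i - w i| :=
        _root_.abs_mul_self_sub_mul_self_le _ _
    _ ≤ 2 * |z i - w i| := by gcongr; linarith

end EuclideanSpace

theorem stmt_13_general (n : ℕ) (f : EuclideanSpace ℝ (Fin n) → ℝ)
    (g : EuclideanSpace ℝ (Fin n) → ℝ)
    (hg : ∀ z, g z = f (WithLp.toLp 2 (fun i => z i * z i) : EuclideanSpace ℝ (Fin n)))
    (zs : EuclideanSpace ℝ (Fin n)) (hzs : ‖zs‖ = 1)
    (ε : ℝ)
    (hmin : ∀ x : EuclideanSpace ℝ (Fin n), (∀ i, 0 ≤ x i) → ∑ i, x i = 1 →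
      (∀ i, |x i - zs i * zs i| < ε) →
      f (WithLp.toLp 2 (fun i => zs i * zs i) : EuclideanSpace ℝ (Fin n)) ≤ f x) :
    ∀ z : EuclideanSpace ℝ (Fin n), ‖z‖ = 1 → (∀ i, |z i - zs i| < ε / 2) →
      g zs ≤ g z := by
  intro z hz hclose
  obtain ⟨hnonneg, hsum⟩ := EuclideanSpace.mul_self_mem_stdSimplex hz
  rw [hg, hg]
  refine hmin _ hnonneg hsum fun i => ?_
  calc |z i * z i - zs i * zs i| ≤ 2 * |z i - zs i| :=
        EuclideanSpace.abs_mul_self_sub_mul_self_le hz.le hzs.le i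
    _ < ε := by linarith [hclose i]

theorem stmt_13 (n : ℕ) (f : EuclideanSpace ℝ (Fin n) → ℝ)
    (hf : Continuous f)
    (g : EuclideanSpace ℝ (Fin n) → ℝ)
    (hg : ∀ z, g z = f (WithLp.toLp 2 (fun i => z i * z i) : EuclideanSpace ℝ (Fin n)))
    (zs : EuclideanSpace ℝ (Fin n)) (hzs : ‖zs‖ = 1)
    (ε : ℝ) (hε : 0 < ε)
    (hmin : ∀ x : EuclideanSpace ℝ (Fin n), (∀ i, 0 ≤ x i) → ∑ i, x i = 1 →
      (∀ i, |x i - zs i * zs i| < ε) →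
      f (WithLp.toLp 2 (fun i => zs i * zs i) : EuclideanSpace ℝ (Fin n)) ≤ f x) :
    ∀ z : EuclideanSpace ℝ (Fin n), ‖z‖ = 1 → (∀ i, |z i - zs i| < ε / 2) →
      g zs ≤ g z :=
  stmt_13_general n f g hg zs hzs ε hmin
end
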